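/- arXiv:0910.2521 — 5 statements merged into one kernel-verified Lean document; each statement's English description precedes it below -/
import Mathlib

section
/- An element α of the braid monoid B⁺ lies in the image φ(W) of the canonical section if and only if ℓ(α) = ℓ(π(α)), where π: B⁺ → W is the natural projection and ℓ denotes the respective length functions. -/
open CoxeterSystem

variable {B : Type*}

/-- The braid relations on the free monoid over `B`, determined by the Coxeter matrix `M`. -/
def braidRelsM (M : CoxeterMatrix B) : FreeMonoid B → FreeMonoid B → Prop :=
  fun a b => ∃ i j : B,
    a = FreeMonoid.ofList (alternatingWord i j (M i j)) ∧
    b = FreeMonoid.ofList (alternatingWord j i (M i j))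

/-- The braid monoid (positive braid monoid) `B⁺` of type `M`. -/
abbrev BraidMonoid (M : CoxeterMatrix B) := PresentedMonoid (braidRelsM M)

/-- The image in the braid monoid of a word in the generators. -/
def braidWordM (M : CoxeterMatrix B) (l : List B) : BraidMonoid M :=
  PresentedMonoid.mk (braidRelsM M) (FreeMonoid.ofList l)

/-- The braid relations as elements of the free group over `B`. -/
def braidRelsG (M : CoxeterMatrix B) : Set (FreeGroup B) :=
  { r | ∃ i j : B, r =
      (List.map FreeGroup.of (alternatingWord i j (M i j))).prod *
      ((List.map FreeGroup.of (alternatingWord j i (M i j))).prod)⁻¹ }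

/-- The Artin braid group of type `M`. -/
abbrev BraidGroup (M : CoxeterMatrix B) := PresentedGroup (braidRelsG M)

/-- The image in the braid group of a word in the generators. -/
def braidWordG (M : CoxeterMatrix B) (l : List B) : BraidGroup M :=
  (List.map (fun i => (PresentedGroup.of i : BraidGroup M)) l).prod

/-- An element `α ∈ B⁺` lies in the image `φ(W)` of the canonical section if
and only if `ℓ(α) = ℓ(π(α))`, where `π : B⁺ → W` is the natural projection and `ℓ` denotes
the respective length functions. -/
theorem mem_range_section_iff_length_eq {W : Type*} [Group W] (M : CoxeterMatrix B)
    (cs : CoxeterSystem M W)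
    (φ : W → BraidMonoid M)
    (hφ : ∀ ω : List B, cs.IsReduced ω → φ (cs.wordProd ω) = braidWordM M ω)
    (p : BraidMonoid M →* W)
    (hp : ∀ i : B, p (PresentedMonoid.of (braidRelsM M) i) = cs.simple i)
    (len : BraidMonoid M → ℕ)
    (hlen : ∀ l : List B, len (braidWordM M l) = l.length)
    (α : BraidMonoid M) :
    α ∈ Set.range φ ↔ len α = cs.length (p α) := by
  have hpw : ∀ l : List B, p (braidWordM M l) = cs.wordProd l := by
    intro l
    induction l with
    | nil => simp [braidWordM, cs.wordProd_nil]
    | cons i l ih =>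
      have : braidWordM M (i :: l) = PresentedMonoid.of (braidRelsM M) i * braidWordM M l := by
        simp only [braidWordM, PresentedMonoid.of, ← map_mul]
        rfl
      rw [this, map_mul, hp, ih, cs.wordProd_cons]
  obtain ⟨a, rfl⟩ := PresentedMonoid.surjective_mk α
  have hα : PresentedMonoid.mk (braidRelsM M) a = braidWordM M a.toList := by
    simp [braidWordM]
  rw [hα, hpw, hlen]
  constructor
  · rintro ⟨w, hw⟩
    obtain ⟨ω, hred, rfl⟩ := cs.exists_reduced_word' w
    rw [hφ ω hred] at hw
    have hl : (a.toList).length = ω.length := by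
      rw [← hlen a.toList, ← hlen ω, hw]
    have hπ : cs.wordProd a.toList = cs.wordProd ω := by
      rw [← hpw, ← hpw, hw]
    rw [hπ, hl, hred]
  · intro h
    exact ⟨cs.wordProd a.toList, hφ a.toList h.symm⟩
end

section
/- The set φ(W) ⊂ B⁺ of canonical lifts of Weyl group elements equals the set of left factors of Δ and also equals the set of right factors of Δ, where Δ = φ(w₀) is the lift of the longest element. In particular, φ(W) is closed under taking left factors and under taking right factors in B⁺. -/
open CoxeterSystem

variable {B : Type*}

/-!
Everything rests on one fact about the longest element: every factorization `w₀ = u v` is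
reduced, `ℓ u + ℓ v = ℓ w₀`. To see it we use the reflection cocycle of Björner–Brenti: the right
inversions of `u v` form the symmetric difference of those of `v` and the `v⁻¹`-conjugates of
those of `u`, while every reflection is a right inversion of `w₀` since `ℓ (w₀ t) ≠ ℓ w₀`.

Then `φ w₀ = φ w * φ (w⁻¹ w₀) = φ (w₀ w⁻¹) * φ w` exhibits every `φ w` as a left and a right
factor of `Δ`. Conversely, if `φ w = α β` with `α`, `β` represented by words `a`, `c`, then
projecting to `W` and counting letters shows that `a ++ c` is a reduced word for `w`, hence so
are `a` and `c`, and `α = φ (π a)`, `β = φ (π c)`.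
-/

namespace CoxeterSystem

variable {W : Type*} [Group W] {M : CoxeterMatrix B} (cs : CoxeterSystem M W)

local prefix:100 "s" => cs.simple
local prefix:100 "π" => cs.wordProd
local prefix:100 "ℓ" => cs.length
local prefix:100 "ris" => cs.rightInvSeq
local prefix:100 "lis" => cs.leftInvSeq

theorem reverse_alternatingWord_two_mul (i j : B) (m : ℕ) :
    (alternatingWord i j (2 * m)).reverse = alternatingWord j i (2 * m) := by
  refine List.ext_getElem (by simp) fun k hk _ => ?_
  simp only [List.length_reverse, length_alternatingWord] at hk
  rw [List.getElem_reverse, getElem_alternatingWord _ _ _ _ (by simp; omega),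
    getElem_alternatingWord _ _ _ _ hk]
  simp only [length_alternatingWord]
  have hparity : Even (2 * m + (2 * m - 1 - k)) ↔ ¬ Even (2 * m + k) := by
    simp only [Nat.even_iff]; omega
  split_ifs <;> simp_all

theorem leftInvSeq_alternatingWord_two_mul (i j : B) (p : ℕ) :
    lis (alternatingWord i j (2 * p)) =
      (List.range (2 * p)).map fun k => π (alternatingWord j i (2 * k + 1)) := by
  refine List.ext_getElem (by simp) fun k hk _ => ?_
  simp only [length_leftInvSeq, length_alternatingWord] at hk
  rw [getElem_leftInvSeq_alternatingWord cs i j p k hk, List.getElem_map, List.getElem_range]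

theorem wordProd_alternatingWord_two_mul_add_one_periodic (i j : B) (k : ℕ) :
    π (alternatingWord i j (2 * (M i j + k) + 1)) = π (alternatingWord i j (2 * k + 1)) := by
  have hdiv : ∀ n, (2 * n + 1) / 2 = n := by omega
  simp [prod_alternatingWord_eq_mul_pow, hdiv, pow_add]

section ReflectionRepresentation

variable [DecidableEq W]

theorem even_count_rightInvSeq_alternatingWord (i j : B) (t : W) :
    Even ((ris (alternatingWord i j (2 * M i j))).count t) := by
  rw [← reverse_alternatingWord_two_mul j i, rightInvSeq_reverse, List.count_reverse,
    leftInvSeq_alternatingWord_two_mul, two_mul, List.range_add, List.map_append, List.map_map]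
  have hperiodic : ((fun k => π (alternatingWord i j (2 * k + 1))) ∘ fun k => M i j + k) =
      fun k => π (alternatingWord i j (2 * k + 1)) := by
    funext k
    exact cs.wordProd_alternatingWord_two_mul_add_one_periodic i j k
  rw [hperiodic, List.count_append]
  exact ⟨_, rfl⟩

/-- The generators of the permutation representation of Björner–Brenti, *Combinatorics of Coxeter
groups*, §1.3, acting on `W × ZMod 2` rather than on `T × {±1}`. -/
def reflectionPerm (i : B) : Equiv.Perm (W × ZMod 2) :=
  Function.Involutive.toPerm (fun p => (s i * p.1 * s i, p.2 + if p.1 = s i then 1 else 0)) <| by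
    rintro ⟨t, e⟩
    have hconj : s i * (s i * t * s i) * s i = t := by simp [mul_assoc]
    have hfix : s i * t * s i = s i ↔ t = s i := by
      constructor
      · intro h; rw [← hconj, h]; simp
      · rintro rfl; simp
    simp only [hconj, hfix, add_assoc, CharTwo.add_self_eq_zero, add_zero]

theorem reflectionPerm_apply (i : B) (t : W) (e : ZMod 2) :
    cs.reflectionPerm i (t, e) = (s i * t * s i, e + if t = s i then 1 else 0) := rfl

theorem list_prod_map_reflectionPerm_apply (ω : List B) (t : W) (e : ZMod 2) :
    (ω.map cs.reflectionPerm).prod (t, e) = (π ω * t * (π ω)⁻¹, e + (ris ω).count t) := by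
  induction ω generalizing e with
  | nil => simp
  | cons i ω ih =>
    have hmem : (π ω)⁻¹ * s i * π ω = t ↔ π ω * t * (π ω)⁻¹ = s i := by
      constructor
      · rintro rfl; group
      · intro h; rw [← h]; group
    simp only [List.map_cons, List.prod_cons, Equiv.Perm.mul_apply, ih, reflectionPerm_apply,
      wordProd_cons, rightInvSeq, List.count_cons, beq_iff_eq, hmem, mul_inv_rev, inv_simple]
    refine Prod.ext (by group) ?_
    push_cast
    ring

theorem reflectionPerm_mul_pow (i j : B) :
    (cs.reflectionPerm i * cs.reflectionPerm j) ^ M i j = 1 := by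
  have hword : ∀ k, (cs.reflectionPerm i * cs.reflectionPerm j) ^ k =
      ((alternatingWord i j (2 * k)).map cs.reflectionPerm).prod := by
    intro k
    induction k with
    | zero => simp [alternatingWord]
    | succ k ih =>
      rw [Nat.mul_succ, alternatingWord_succ', alternatingWord_succ', pow_succ', ih]
      simp [mul_assoc]
  ext ⟨t, e⟩ : 1
  obtain ⟨c, hc⟩ := cs.even_count_rightInvSeq_alternatingWord i j t
  rw [hword, list_prod_map_reflectionPerm_apply, prod_alternatingWord_eq_mul_pow]
  simp [hc, CharTwo.add_self_eq_zero]

def reflectionRep : W →* Equiv.Perm (W × ZMod 2) :=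
  cs.lift ⟨cs.reflectionPerm, cs.reflectionPerm_mul_pow⟩

theorem reflectionRep_wordProd (ω : List B) :
    cs.reflectionRep (π ω) = (ω.map cs.reflectionPerm).prod := by
  rw [wordProd, map_list_prod, List.map_map]
  exact congrArg _ (List.map_congr_left fun i _ => cs.lift_apply_simple _ i)

def rightInversionParity (w t : W) : ZMod 2 := (cs.reflectionRep w (t, 0)).2

theorem rightInversionParity_wordProd (ω : List B) (t : W) :
    cs.rightInversionParity (π ω) t = (ris ω).count t := by
  rw [rightInversionParity, reflectionRep_wordProd, list_prod_map_reflectionPerm_apply, zero_add]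

theorem reflectionRep_apply (w t : W) (e : ZMod 2) :
    cs.reflectionRep w (t, e) = (w * t * w⁻¹, e + cs.rightInversionParity w t) := by
  obtain ⟨ω, -, rfl⟩ := cs.exists_isReduced w
  rw [reflectionRep_wordProd, list_prod_map_reflectionPerm_apply, rightInversionParity_wordProd]

theorem rightInversionParity_mul (u v t : W) :
    cs.rightInversionParity (u * v) t =
      cs.rightInversionParity v t + cs.rightInversionParity u (v * t * v⁻¹) := by
  rw [rightInversionParity, map_mul, Equiv.Perm.mul_apply, reflectionRep_apply cs v, zero_add,
    reflectionRep_apply]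

theorem rightInversionParity_one (t : W) : cs.rightInversionParity 1 t = 0 := by
  rw [rightInversionParity, map_one]
  rfl

theorem rightInversionParity_inv (u t : W) :
    cs.rightInversionParity u⁻¹ t = cs.rightInversionParity u (u⁻¹ * t * u) := by
  have h := cs.rightInversionParity_mul u⁻¹ u (u⁻¹ * t * u)
  rw [inv_mul_cancel, rightInversionParity_one, show u * (u⁻¹ * t * u) * u⁻¹ = t by group] at h
  exact (CharTwo.add_eq_zero.mp h.symm).symm

theorem rightInversionParity_reflection_self {t : W} (ht : cs.IsReflection t) :
    cs.rightInversionParity t t = 1 := by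
  obtain ⟨u, i, rfl⟩ := ht
  have hsimple : cs.rightInversionParity (s i) (s i) = 1 := by
    simpa using cs.rightInversionParity_wordProd [i] (s i)
  have hconj : u⁻¹ * (u * s i * u⁻¹) * u = s i := by group
  rw [cs.rightInversionParity_mul (u * s i), rightInversionParity_inv, hconj, inv_inv, hconj,
    rightInversionParity_mul, hsimple, mul_inv_cancel_right, add_left_comm,
    CharTwo.add_self_eq_zero, add_zero]

theorem rightInversionParity_wordProd_eq_one_iff {ω : List B} (hω : cs.IsReduced ω) {t : W} :
    cs.rightInversionParity (π ω) t = 1 ↔ t ∈ ris ω := by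
  rw [rightInversionParity_wordProd]
  by_cases ht : t ∈ ris ω
  · simp [ht, List.count_eq_one_of_mem hω.nodup_rightInvSeq ht]
  · simp [ht, List.count_eq_zero_of_not_mem ht]

theorem isRightInversion_of_rightInversionParity_eq_one {w t : W}
    (h : cs.rightInversionParity w t = 1) : cs.IsRightInversion w t := by
  obtain ⟨ω, hω, rfl⟩ := cs.exists_isReduced w
  exact cs.isRightInversion_of_mem_rightInvSeq hω
    ((cs.rightInversionParity_wordProd_eq_one_iff hω).mp h)

theorem rightInversionParity_eq_one_iff {w t : W} :
    cs.rightInversionParity w t = 1 ↔ cs.IsRightInversion w t := by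
  refine ⟨cs.isRightInversion_of_rightInversionParity_eq_one, fun ⟨ht, hlt⟩ => ?_⟩
  by_contra hne
  have h0 : cs.rightInversionParity w t = 0 := by
    revert hne; generalize cs.rightInversionParity w t = x; revert x; decide
  have hwt : cs.rightInversionParity (w * t) t = 1 := by
    rw [rightInversionParity_mul, rightInversionParity_reflection_self cs ht,
      show t * t * t⁻¹ = t by group, h0, add_zero]
  have := (cs.isRightInversion_of_rightInversionParity_eq_one hwt).2
  rw [mul_assoc, ht.mul_self, mul_one] at this
  omega

end ReflectionRepresentation

theorem length_eq_encard_setOf_isRightInversion (w : W) :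
    (ℓ w : ℕ∞) = {t | cs.IsRightInversion w t}.encard := by
  classical
  obtain ⟨ω, hω, rfl⟩ := cs.exists_isReduced w
  have hset : {t | cs.IsRightInversion (π ω) t} = ((ris ω).toFinset : Set W) := by
    ext t
    simp [← rightInversionParity_eq_one_iff, cs.rightInversionParity_wordProd_eq_one_iff hω]
  rw [hset, Set.encard_coe_eq_coe_finsetCard, List.toFinset_card_of_nodup hω.nodup_rightInvSeq,
    length_rightInvSeq, hω.eq]

theorem length_mul_of_forall_isRightInversion {w v : W}
    (h : ∀ t, cs.IsReflection t → cs.IsRightInversion (w * v) t) : ℓ (w * v) = ℓ w + ℓ v := by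
  classical
  set S := (fun t => v * t * v⁻¹) ⁻¹' {t | cs.IsRightInversion w t}
  have hparity (t : W) : cs.rightInversionParity (w * v) t =
      cs.rightInversionParity v t + cs.rightInversionParity w (v * t * v⁻¹) :=
    cs.rightInversionParity_mul w v t
  have hsplit : {t | cs.IsRightInversion (w * v) t} = {t | cs.IsRightInversion v t} ∪ S := by
    ext t
    simp only [S, Set.mem_union, Set.mem_ofPred_eq, Set.mem_preimage]
    constructor
    · simp only [← rightInversionParity_eq_one_iff, hparity]
      generalize cs.rightInversionParity v t = a
      generalize cs.rightInversionParity w (v * t * v⁻¹) = b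
      revert a b
      decide
    · rintro (ht | ht)
      · exact h t ht.1
      · exact h t ((cs.isReflection_conj_iff v t).mp ht.1)
  have hdisj : Disjoint {t | cs.IsRightInversion v t} S := by
    refine Set.disjoint_left.mpr fun t hv hw => ?_
    have hwv := (cs.rightInversionParity_eq_one_iff).mpr (h t hv.1)
    rw [hparity, (cs.rightInversionParity_eq_one_iff).mpr hv,
      (cs.rightInversionParity_eq_one_iff).mpr hw] at hwv
    exact absurd hwv (by decide)
  have hS : S.encard = ℓ w := by
    rw [Set.encard_preimage_of_injective_subset_range, length_eq_encard_setOf_isRightInversion]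
    · exact fun a b hab => by simpa using hab
    · exact fun t _ => ⟨v⁻¹ * t * v, by group⟩
  have := cs.length_eq_encard_setOf_isRightInversion (w * v)
  rw [hsplit, Set.encard_union_eq hdisj, hS, ← length_eq_encard_setOf_isRightInversion] at this
  exact_mod_cast this.trans (add_comm _ _)

theorem length_mul_of_forall_length_le {u v : W} (hmax : ∀ w, ℓ w ≤ ℓ (u * v)) :
    ℓ (u * v) = ℓ u + ℓ v := by
  refine cs.length_mul_of_forall_isRightInversion fun t ht => ⟨ht, ?_⟩
  have := ht.length_mul_left_ne (u * v)
  have := hmax (u * v * t)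
  omega

end CoxeterSystem

namespace BraidMonoid

variable {M : CoxeterMatrix B}

theorem braidWordM_append (l l' : List B) :
    braidWordM M (l ++ l') = braidWordM M l * braidWordM M l' := by
  rw [braidWordM, FreeMonoid.ofList_append, map_mul]
  rfl

theorem exists_braidWordM_eq (α : BraidMonoid M) : ∃ l, braidWordM M l = α := by
  obtain ⟨x, rfl⟩ := PresentedMonoid.surjective_mk α
  exact ⟨x.toList, rfl⟩

def lengthHom : BraidMonoid M →* Multiplicative ℕ :=
  PresentedMonoid.lift (fun _ => Multiplicative.ofAdd 1) <| by
    rintro _ _ ⟨i, j, rfl, rfl⟩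
    simp [FreeMonoid.lift_ofList]

theorem lengthHom_braidWordM (l : List B) :
    lengthHom (braidWordM M l) = Multiplicative.ofAdd l.length :=
  (FreeMonoid.lift_ofList _ _).trans (by simp [← ofAdd_nsmul])

variable {W : Type*} [Group W] (cs : CoxeterSystem M W)

def toCoxeterGroup : BraidMonoid M →* W :=
  PresentedMonoid.lift cs.simple <| by
    rintro _ _ ⟨i, j, rfl, rfl⟩
    rw [FreeMonoid.lift_ofList, FreeMonoid.lift_ofList]
    simpa only [braidWord, wordProd, M.symmetric j i] using cs.wordProd_braidWord_eq i j

theorem toCoxeterGroup_braidWordM (l : List B) :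
    toCoxeterGroup cs (braidWordM M l) = cs.wordProd l :=
  FreeMonoid.lift_ofList _ _

theorem isReduced_of_braidWordM_eq {l l' : List B} (h : braidWordM M l = braidWordM M l')
    (hl : cs.IsReduced l) : cs.IsReduced l' := by
  have hπ := congrArg (toCoxeterGroup cs) h
  have hlen := congrArg lengthHom h
  rw [toCoxeterGroup_braidWordM, toCoxeterGroup_braidWordM] at hπ
  rw [lengthHom_braidWordM, lengthHom_braidWordM, EmbeddingLike.apply_eq_iff_eq] at hlen
  rw [CoxeterSystem.IsReduced, ← hπ, hl.eq, hlen]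

end BraidMonoid

def IsCanonicalSection {W : Type*} [Group W] {M : CoxeterMatrix B} (cs : CoxeterSystem M W)
    (φ : W → BraidMonoid M) : Prop :=
  ∀ ω, cs.IsReduced ω → φ (cs.wordProd ω) = braidWordM M ω

namespace IsCanonicalSection

open BraidMonoid

variable {W : Type*} [Group W] {M : CoxeterMatrix B} {cs : CoxeterSystem M W}
  {φ : W → BraidMonoid M}

theorem map_mul_of_length_add (hφ : IsCanonicalSection cs φ) {u v : W}
    (h : cs.length (u * v) = cs.length u + cs.length v) : φ (u * v) = φ u * φ v := by
  obtain ⟨ω, hω, rfl⟩ := cs.exists_isReduced u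
  obtain ⟨ω', hω', rfl⟩ := cs.exists_isReduced v
  have hred : cs.IsReduced (ω ++ ω') := by
    rw [CoxeterSystem.IsReduced, wordProd_append, h, hω.eq, hω'.eq, List.length_append]
  rw [← wordProd_append, hφ _ hred, hφ _ hω, hφ _ hω', braidWordM_append]

theorem mem_range_of_mul_mem_range (hφ : IsCanonicalSection cs φ) {α β : BraidMonoid M}
    (h : α * β ∈ Set.range φ) : α ∈ Set.range φ ∧ β ∈ Set.range φ := by
  obtain ⟨w, hw⟩ := h
  obtain ⟨ω, hω, rfl⟩ := cs.exists_isReduced w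
  obtain ⟨a, rfl⟩ := exists_braidWordM_eq α
  obtain ⟨c, rfl⟩ := exists_braidWordM_eq β
  have hac : cs.IsReduced (a ++ c) :=
    isReduced_of_braidWordM_eq cs (by rw [braidWordM_append, ← hw, hφ _ hω]) hω
  have ha := hac.take a.length
  have hc := hac.drop a.length
  rw [List.take_left] at ha
  rw [List.drop_left] at hc
  exact ⟨⟨_, hφ a ha⟩, ⟨_, hφ c hc⟩⟩

end IsCanonicalSection

theorem range_section_eq_factors_of_garside_element_general {W : Type*} [Group W]
    (M : CoxeterMatrix B) (cs : CoxeterSystem M W)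
    (φ : W → BraidMonoid M)
    (hφ : ∀ ω : List B, cs.IsReduced ω → φ (cs.wordProd ω) = braidWordM M ω)
    (w₀ : W) (hw₀ : ∀ w : W, cs.length w ≤ cs.length w₀) :
    Set.range φ = {α : BraidMonoid M | ∃ γ, φ w₀ = α * γ} ∧
    Set.range φ = {α : BraidMonoid M | ∃ β, φ w₀ = β * α} ∧
    (∀ α β : BraidMonoid M, α * β ∈ Set.range φ → α ∈ Set.range φ ∧ β ∈ Set.range φ) := by
  replace hφ : IsCanonicalSection cs φ := hφ
  have hsplit {u v : W} (huv : u * v = w₀) : φ w₀ = φ u * φ v := by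
    subst huv
    exact hφ.map_mul_of_length_add (cs.length_mul_of_forall_length_le hw₀)
  have hfactor {α β : BraidMonoid M} (h : φ w₀ = α * β) : α ∈ Set.range φ ∧ β ∈ Set.range φ :=
    hφ.mem_range_of_mul_mem_range ⟨w₀, h⟩
  refine ⟨Set.ext fun α => ⟨?_, fun ⟨γ, h⟩ => (hfactor h).1⟩,
    Set.ext fun α => ⟨?_, fun ⟨β, h⟩ => (hfactor h).2⟩, fun α β => hφ.mem_range_of_mul_mem_range⟩
  · rintro ⟨w, rfl⟩
    exact ⟨_, hsplit (mul_inv_cancel_left w w₀)⟩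
  · rintro ⟨w, rfl⟩
    exact ⟨_, hsplit (inv_mul_cancel_right w₀ w)⟩

/-- `φ(W) ⊆ B⁺` equals the set of left factors of `Δ = φ(w₀)` and also the set
of right factors of `Δ`; in particular `φ(W)` is closed under taking left and right factors.
(In `B⁺` every factorization is automatically reduced since length is additive.) -/
theorem range_section_eq_factors_of_garside_element {W : Type*} [Group W] [Finite W]
    (M : CoxeterMatrix B) (cs : CoxeterSystem M W)
    (φ : W → BraidMonoid M)
    (hφ : ∀ ω : List B, cs.IsReduced ω → φ (cs.wordProd ω) = braidWordM M ω)
    (w₀ : W) (hw₀ : ∀ w : W, cs.length w ≤ cs.length w₀) :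
    Set.range φ = {α : BraidMonoid M | ∃ γ, φ w₀ = α * γ} ∧
    Set.range φ = {α : BraidMonoid M | ∃ β, φ w₀ = β * α} ∧
    (∀ α β : BraidMonoid M, α * β ∈ Set.range φ → α ∈ Set.range φ ∧ β ∈ Set.range φ) :=
  range_section_eq_factors_of_garside_element_general M cs φ hφ w₀ hw₀
end

section
/- Let S₁, S₂ be 2-spherical objects in an enhanced triangulated category with Ext*(S₁,S₂) one-dimensional and concentrated in degree 1 (an A₂-configuration). Then t₁t₂(S₁) ≅ S₂, where t_i denotes the spherical twist along S_i. -/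
/-!
Since `Hom(S₁, S₂) = 0`, the nonzero map `u : S₁ ⟶ X` is killed by `X ⟶ S₂`, so it factors
through the map `S₁ ⟶ X` of the triangle `S₂[-1] ⟶ S₁ ⟶ X ⟶ S₂`. As `End(S₁) = k`, this
factorisation is a nonzero scalar, so `u` agrees with `S₁ ⟶ X` up to an automorphism of `S₁`, and
the cone of `u` is the cone of `S₁ ⟶ X`, which is `S₂` by rotating the triangle.
-/

open CategoryTheory CategoryTheory.Limits CategoryTheory.Pretriangulated TensorProduct

variable {k : Type*} [Field k]
variable {C : Type*} [Category C] [Preadditive C] [HasZeroObject C] [Linear k C]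
  [HasShift C ℤ] [∀ n : ℤ, (CategoryTheory.shiftFunctor C n).Additive] [Pretriangulated C]

/-- The composition pairing `Hom(S, X[d]) ⊗ Hom(X, S[2-d]) → Hom(S, S[2])`. -/
def compPair (S X : C) (d : ℤ) (f : S ⟶ X⟦d⟧) (g : X ⟶ S⟦(2 : ℤ) - d⟧) :
    S ⟶ S⟦(2 : ℤ)⟧ :=
  f ≫ (shiftFunctor C d).map g ≫ (shiftFunctorAdd' C ((2 : ℤ) - d) d 2 (by omega)).inv.app S

/-- An object `S` of a `k`-linear triangulated category is 2-spherical: its graded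
endomorphisms are one-dimensional in degrees `0` and `2` and vanish otherwise, all graded
Hom-spaces out of and into `S` are finite dimensional, and the composition pairing
`Hom(S, X[d]) ⊗ Hom(X, S[2-d]) → Hom(S, S[2]) ≅ k` is perfect (the 2-Calabi–Yau property
`RHom(S, X) ≅ RHom(X, S[2])^∨`). -/
def IsTwoSpherical (S : C) : Prop :=
  Module.finrank k (S ⟶ S⟦(0 : ℤ)⟧) = 1 ∧
  Module.finrank k (S ⟶ S⟦(2 : ℤ)⟧) = 1 ∧
  (∀ d : ℤ, d ≠ 0 → d ≠ 2 → ∀ f : S ⟶ S⟦d⟧, f = 0) ∧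
  (∀ (X : C) (d : ℤ), FiniteDimensional k (S ⟶ X⟦d⟧)) ∧
  (∀ (X : C) (d : ℤ) (f : S ⟶ X⟦d⟧), f ≠ 0 →
    ∃ g : X ⟶ S⟦(2 : ℤ) - d⟧, compPair S X d f g ≠ 0) ∧
  (∀ (X : C) (d : ℤ) (g : X ⟶ S⟦(2 : ℤ) - d⟧), g ≠ 0 →
    ∃ f : S ⟶ X⟦d⟧, compPair S X d f g ≠ 0)

/-- The data of the spherical twist along `S`: a functor `t` together with a functor
`E` (playing the role of `Y ↦ RHom(S,Y) ⊗ S`), a counit `f : E ⟶ Id`, a natural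
transformation `g : Id ⟶ t`, and connecting maps making
`E Y ⟶ Y ⟶ t Y ⟶ E Y [1]` a distinguished triangle for every `Y`; the structure of `E` as
`RHom(S,Y) ⊗ S` is recorded by natural identifications
`Hom(T, (E Y)[d]) ≅ ⊕ₑ Hom(S, Y[e]) ⊗ Hom(T, S[d-e])` for every test object `T`. -/
structure TwistDatum (k : Type*) [Field k] {C : Type*} [Category C] [Preadditive C]
    [HasZeroObject C] [Linear k C] [HasShift C ℤ]
    [∀ n : ℤ, (CategoryTheory.shiftFunctor C n).Additive] [Pretriangulated C] (S : C) where
  t : C ⥤ C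
  E : C ⥤ C
  f : E ⟶ 𝟭 C
  g : 𝟭 C ⟶ t
  h : ∀ Y : C, t.obj Y ⟶ (E.obj Y)⟦(1 : ℤ)⟧
  tri : ∀ Y : C, Triangle.mk (f.app Y) (g.app Y) (h Y) ∈ distTriang C
  hE : ∀ (T Y : C) (d : ℤ),
    Nonempty ((T ⟶ (E.obj Y)⟦d⟧) ≃ₗ[k]
      DirectSum ℤ (fun e : ℤ => (S ⟶ Y⟦e⟧) ⊗[k] (T ⟶ S⟦d - e⟧)))

section

variable {K : Type*} [Field K] {D : Type*} [Category D] [Preadditive D] [Linear K D]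

def smulIdIso (S : D) {c : K} (hc : c ≠ 0) : S ≅ S where
  hom := c • 𝟙 S
  inv := c⁻¹ • 𝟙 S
  hom_inv_id := by
    rw [Linear.smul_comp, Linear.comp_smul, Category.id_comp, smul_smul, mul_inv_cancel₀ hc,
      one_smul]
  inv_hom_id := by
    rw [Linear.smul_comp, Linear.comp_smul, Category.id_comp, smul_smul, inv_mul_cancel₀ hc,
      one_smul]

lemma exists_eq_smul_id_of_finrank_eq_one {S : D} (h : Module.finrank K (S ⟶ S) = 1)
    (e : S ⟶ S) : ∃ c : K, e = c • 𝟙 S := by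
  have hid : 𝟙 S ≠ 0 := by
    intro h0
    have : Subsingleton (S ⟶ S) :=
      ⟨fun a b => by rw [← Category.comp_id a, ← Category.comp_id b, h0, comp_zero, comp_zero]⟩
    simp [Module.finrank_zero_of_subsingleton] at h
  obtain ⟨c, hc⟩ := (finrank_eq_one_iff_of_nonzero' (K := K) _ hid).mp h e
  exact ⟨c, hc.symm⟩

variable [HasZeroObject D] [HasShift D ℤ] [∀ n : ℤ, (shiftFunctor D n).Additive]
  [Pretriangulated D]

lemma nonempty_iso_of_distTriang_smul {A B Z Z' : D} {f : A ⟶ B} {v : B ⟶ Z} {w : Z ⟶ A⟦(1 : ℤ)⟧}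
    {v' : B ⟶ Z'} {w' : Z' ⟶ A⟦(1 : ℤ)⟧} {c : K} (hc : c ≠ 0)
    (hT : Triangle.mk (c • f) v w ∈ distTriang D) (hT' : Triangle.mk f v' w' ∈ distTriang D) :
    Nonempty (Z ≅ Z') :=
  ⟨Triangle.π₃.mapIso <| isoTriangleOfIso₁₂ _ _ hT hT' (smulIdIso A hc) (Iso.refl B)
    (show (c • f) ≫ 𝟙 B = (c • 𝟙 A) ≫ f by simp)⟩

end

/-- Here `t₂(S₁)` is the cone `X` of the evaluation `RHom(S₂,S₁) ⊗ S₂ ≅ S₂[-1] → S₁` (given by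
`ψ`), and `t₁(X)` is the cone `Z` of the evaluation `RHom(S₁,X) ⊗ S₁ → X`, which
is given by a nonzero map `u : S₁ → X` since `RHom(S₁,X)` is one-dimensional in degree 0. -/
theorem twist_twist_of_A2_configuration_general
    (S₁ S₂ : C) (h1 : IsTwoSpherical (k := k) S₁)
    (hadj : Module.finrank k (S₁ ⟶ S₂⟦(1 : ℤ)⟧) = 1 ∧
      Module.finrank k (S₂ ⟶ S₁⟦(1 : ℤ)⟧) = 1 ∧
      (∀ d : ℤ, d ≠ 1 → ∀ f : S₁ ⟶ S₂⟦d⟧, f = 0) ∧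
      (∀ d : ℤ, d ≠ 1 → ∀ f : S₂ ⟶ S₁⟦d⟧, f = 0))
    (ψ : S₂⟦(-1 : ℤ)⟧ ⟶ S₁)
    (X : C) (g₁ : S₁ ⟶ X) (h₁ : X ⟶ (S₂⟦(-1 : ℤ)⟧)⟦(1 : ℤ)⟧)
    (htri₁ : Triangle.mk ψ g₁ h₁ ∈ distTriang C)
    (u : S₁ ⟶ X) (hu : u ≠ 0)
    (Z : C) (v : X ⟶ Z) (w : Z ⟶ S₁⟦(1 : ℤ)⟧)
    (htri₂ : Triangle.mk u v w ∈ distTriang C) :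
    Nonempty (Z ≅ S₂) := by
  obtain ⟨hend, -⟩ := h1
  obtain ⟨-, -, hvanish, -⟩ := hadj
  let α : (S₂⟦(-1 : ℤ)⟧)⟦(1 : ℤ)⟧ ≅ S₂ := (shiftFunctorCompIsoId C (-1) 1 (by norm_num)).app S₂
  have hu_comp : u ≫ h₁ = 0 := by
    have := hvanish 0 (by norm_num) ((u ≫ h₁) ≫ α.hom ≫ (shiftFunctorZero C ℤ).inv.app S₂)
    rwa [Preadditive.IsIso.comp_right_eq_zero] at this
  obtain ⟨e, he⟩ : ∃ e : S₁ ⟶ S₁, u = e ≫ g₁ := Triangle.coyoneda_exact₃ _ htri₁ u hu_comp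
  have hEnd : Module.finrank k (S₁ ⟶ S₁) = 1 :=
    hend ▸ (Linear.homCongr k (Iso.refl S₁) ((shiftFunctorZero C ℤ).app S₁).symm).finrank_eq
  obtain ⟨c, rfl⟩ := exists_eq_smul_id_of_finrank_eq_one hEnd e
  obtain rfl : u = c • g₁ := by simpa using he
  have hc : c ≠ 0 := by
    rintro rfl
    exact hu (zero_smul k g₁)
  obtain ⟨iso⟩ := nonempty_iso_of_distTriang_smul hc htri₂ (rot_of_distTriang _ htri₁)
  exact ⟨iso ≪≫ α⟩

/-- For an `A₂`-configuration `S₁, S₂` of 2-spherical objects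
(`Ext*(S₁,S₂)` one-dimensional, concentrated in degree 1), one has `t₁ t₂ (S₁) ≅ S₂`.
Here `t₂(S₁)` is the cone `X` of the evaluation `RHom(S₂,S₁) ⊗ S₂ ≅ S₂[-1] → S₁` (given by
a nonzero `ψ`), and `t₁(X)` is the cone `Z` of the evaluation `RHom(S₁,X) ⊗ S₁ → X`, which
is given by a nonzero map `u : S₁ → X` since `RHom(S₁,X)` is one-dimensional in degree 0. -/
theorem twist_twist_of_A2_configuration
    (S₁ S₂ : C) (h1 : IsTwoSpherical (k := k) S₁) (h2 : IsTwoSpherical (k := k) S₂)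
    (hadj : Module.finrank k (S₁ ⟶ S₂⟦(1 : ℤ)⟧) = 1 ∧
      Module.finrank k (S₂ ⟶ S₁⟦(1 : ℤ)⟧) = 1 ∧
      (∀ d : ℤ, d ≠ 1 → ∀ f : S₁ ⟶ S₂⟦d⟧, f = 0) ∧
      (∀ d : ℤ, d ≠ 1 → ∀ f : S₂ ⟶ S₁⟦d⟧, f = 0))
    (ψ : S₂⟦(-1 : ℤ)⟧ ⟶ S₁) (hψ : ψ ≠ 0)
    (X : C) (g₁ : S₁ ⟶ X) (h₁ : X ⟶ (S₂⟦(-1 : ℤ)⟧)⟦(1 : ℤ)⟧)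
    (htri₁ : Triangle.mk ψ g₁ h₁ ∈ distTriang C)
    (u : S₁ ⟶ X) (hu : u ≠ 0)
    (Z : C) (v : X ⟶ Z) (w : Z ⟶ S₁⟦(1 : ℤ)⟧)
    (htri₂ : Triangle.mk u v w ∈ distTriang C) :
    Nonempty (Z ≅ S₂) :=
  twist_twist_of_A2_configuration_general S₁ S₂ h1 hadj ψ X g₁ h₁ htri₁ u hu Z v w htri₂
end

section
/- Let S_i be a 2-spherical object with twist t_i, and Y an object such that Hom(S_i, Y[d]) = 0 for d > l and Hom(S_i, Y[l]) ≠ 0. Then Hom(S_i, t_i Y[d]) = 0 for d > l+1 and Hom(S_i, t_i Y[l+1]) ≠ 0; i.e., twisting Y by t_i increases by exactly one the maximal degree of a nonzero map from S_i. -/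
open CategoryTheory CategoryTheory.Limits CategoryTheory.Pretriangulated TensorProduct

variable {k : Type*} [Field k]
variable {C : Type*} [Category C] [Preadditive C] [HasZeroObject C] [Linear k C]
  [HasShift C ℤ] [∀ n : ℤ, (CategoryTheory.shiftFunctor C n).Additive] [Pretriangulated C]

/-!
Apply `Hom(S, -)` to the triangle `E Y → Y → t Y → (E Y)[1]`. Since `Hom(S, S[*])` is
concentrated in degrees `0` and `2`, `Hom(S, (E Y)[d])` is built from `Hom(S, Y[d])` and
`Hom(S, Y[d-2]) ⊗ Hom(S, S[2])`: it vanishes for `d > l + 2` and is nonzero for `d = l + 2`.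
For `d > l + 1` the exact sequence `Hom(S, Y[d]) → Hom(S, (t Y)[d]) → Hom(S, (E Y)[d+1])` has
vanishing ends, and `Hom(S, (t Y)[l+1]) → Hom(S, (E Y)[l+2]) → Hom(S, Y[l+2]) = 0` maps onto a
nonzero space.
-/

namespace CategoryTheory.Pretriangulated

lemma subsingleton_hom_shift_shift {D : Type*} [Category D] [HasShift D ℤ] {A X : D} {a b c : ℤ}
    (h : a + b = c) [Subsingleton (A ⟶ X⟦c⟧)] : Subsingleton (A ⟶ X⟦a⟧⟦b⟧) :=
  ((Iso.refl A).homCongr ((shiftFunctorAdd' D a b c h).app X)).symm.subsingleton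

lemma nontrivial_hom_shift_shift {D : Type*} [Category D] [HasShift D ℤ] {A X : D} {a b c : ℤ}
    (h : a + b = c) [Nontrivial (A ⟶ X⟦c⟧)] : Nontrivial (A ⟶ X⟦a⟧⟦b⟧) :=
  ((Iso.refl A).homCongr ((shiftFunctorAdd' D a b c h).app X)).symm.nontrivial

namespace Triangle

variable {Tr : Triangle C} (hT : Tr ∈ distTriang C) (A : C) (d : ℤ)
include hT

lemma subsingleton_hom_shift_obj₃ (h₂ : Subsingleton (A ⟶ Tr.obj₂⟦d⟧))
    (h₁ : Subsingleton (A ⟶ Tr.obj₁⟦d + 1⟧)) : Subsingleton (A ⟶ Tr.obj₃⟦d⟧) := by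
  have h₁' : Subsingleton (A ⟶ Tr.obj₁⟦d⟧⟦(1 : ℤ)⟧) := subsingleton_hom_shift_shift rfl
  refine subsingleton_of_forall_eq 0 fun f => ?_
  obtain ⟨u, rfl⟩ := coyoneda_exact₃ _ (shift_distinguished Tr hT d) f (h₁'.elim _ _)
  rw [h₂.elim u 0]
  exact Limits.zero_comp

lemma nontrivial_hom_shift_obj₃ (h₂ : Subsingleton (A ⟶ Tr.obj₂⟦d + 1⟧))
    (h₁ : Nontrivial (A ⟶ Tr.obj₁⟦d + 1⟧)) : Nontrivial (A ⟶ Tr.obj₃⟦d⟧) := by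
  have h₂' : Subsingleton (A ⟶ Tr.obj₂⟦d⟧⟦(1 : ℤ)⟧) := subsingleton_hom_shift_shift rfl
  have : Nontrivial (A ⟶ Tr.obj₁⟦d⟧⟦(1 : ℤ)⟧) := nontrivial_hom_shift_shift rfl
  obtain ⟨φ, hφ⟩ := exists_ne (0 : A ⟶ Tr.obj₁⟦d⟧⟦(1 : ℤ)⟧)
  obtain ⟨ψ, hψ⟩ := coyoneda_exact₁ _ (shift_distinguished Tr hT d) φ (h₂'.elim _ _)
  exact nontrivial_of_ne ψ 0 fun h => hφ (by rw [hψ, h]; exact Limits.zero_comp)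

end Triangle

end CategoryTheory.Pretriangulated

namespace TwistDatum

variable {S : C} (T : TwistDatum k S) (hS : IsTwoSpherical (k := k) S) (Y : C) (d : ℤ)
include hS

lemma subsingleton_hom_shift_E [Subsingleton (S ⟶ Y⟦d⟧)] [Subsingleton (S ⟶ Y⟦d - 2⟧)] :
    Subsingleton (S ⟶ (T.E.obj Y)⟦d⟧) := by
  obtain ⟨φ⟩ := T.hE S Y d
  have (e : ℤ) : Subsingleton ((S ⟶ Y⟦e⟧) ⊗[k] (S ⟶ S⟦d - e⟧)) := by
    by_cases h₀ : d - e = 0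
    · obtain rfl : e = d := by omega
      infer_instance
    by_cases h₂ : d - e = 2
    · obtain rfl : e = d - 2 := by omega
      infer_instance
    have := subsingleton_of_forall_eq 0 (hS.2.2.1 _ h₀ h₂)
    infer_instance
  exact φ.toEquiv.subsingleton

lemma nontrivial_hom_shift_E [Nontrivial (S ⟶ Y⟦d⟧)] :
    Nontrivial (S ⟶ (T.E.obj Y)⟦d + 2⟧) := by
  obtain ⟨φ⟩ := T.hE S Y (d + 2)
  have : Nontrivial (S ⟶ S⟦d + 2 - d⟧) := by
    rw [show d + 2 - d = 2 by omega]
    exact Module.nontrivial_of_finrank_eq_succ hS.2.1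
  have := (DirectSum.of_injective (β := fun e : ℤ => (S ⟶ Y⟦e⟧) ⊗[k] (S ⟶ S⟦d + 2 - e⟧))
    d).nontrivial
  exact φ.toEquiv.nontrivial

end TwistDatum

theorem twist_increases_max_degree_by_one_general
    (S : C) (hS : IsTwoSpherical (k := k) S)
    (T : TwistDatum k S)
    (Y : C) (l : ℤ)
    (hvan : ∀ d : ℤ, l < d → ∀ f : S ⟶ Y⟦d⟧, f = 0)
    (hnz : ∃ f : S ⟶ Y⟦l⟧, f ≠ 0) :
    (∀ d : ℤ, l + 1 < d → ∀ f : S ⟶ (T.t.obj Y)⟦d⟧, f = 0) ∧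
    (∃ f : S ⟶ (T.t.obj Y)⟦l + 1⟧, f ≠ 0) := by
  have hY (d : ℤ) (hd : l < d) : Subsingleton (S ⟶ Y⟦d⟧) :=
    subsingleton_of_forall_eq 0 (hvan d hd)
  constructor
  · intro d hd f
    have := hY (d + 1) (by omega)
    have := hY (d + 1 - 2) (by omega)
    have : Subsingleton (S ⟶ (T.t.obj Y)⟦d⟧) := Triangle.subsingleton_hom_shift_obj₃ (T.tri Y) S d
      (hY d (by omega)) (T.subsingleton_hom_shift_E hS Y (d + 1))
    exact Subsingleton.elim f 0
  · obtain ⟨f, hf⟩ := hnz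
    have := nontrivial_of_ne f 0 hf
    have hE := T.nontrivial_hom_shift_E hS Y l
    rw [show l + 2 = l + 1 + 1 by omega] at hE
    have : Nontrivial (S ⟶ (T.t.obj Y)⟦l + 1⟧) := Triangle.nontrivial_hom_shift_obj₃ (T.tri Y) S
      (l + 1) (hY (l + 1 + 1) (by omega)) hE
    exact exists_ne 0

/-- Let `S` be a 2-spherical object with spherical twist `t`, and `Y` an
object such that `Hom(S, Y[d]) = 0` for `d > l` and `Hom(S, Y[l]) ≠ 0`.  Then
`Hom(S, tY[d]) = 0` for `d > l + 1` and `Hom(S, tY[l+1]) ≠ 0`: twisting `Y` by `t`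
increases by exactly one the maximal degree of a nonzero map from `S`. -/
theorem twist_increases_max_degree_by_one
    (S : C) (hS : IsTwoSpherical (k := k) S)
    (T : TwistDatum k S) (ht : T.t.IsEquivalence) (hts : T.t.CommShift ℤ)
    (e : T.t.obj S ≅ S⟦(-1 : ℤ)⟧)
    (Y : C) (l : ℤ)
    (hvan : ∀ d : ℤ, l < d → ∀ f : S ⟶ Y⟦d⟧, f = 0)
    (hnz : ∃ f : S ⟶ Y⟦l⟧, f ≠ 0) :
    (∀ d : ℤ, l + 1 < d → ∀ f : S ⟶ (T.t.obj Y)⟦d⟧, f = 0) ∧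
    (∃ f : S ⟶ (T.t.obj Y)⟦l + 1⟧, f ≠ 0) :=
  twist_increases_max_degree_by_one_general S hS T Y l hvan hnz
end

section
/- Let S_i, i ∈ Γ, be a Γ-configuration of 2-spherical objects, S = ⊕_i S_i, and Y an object with p maximal such that Hom(S, Y[p]) ≠ 0. If q is maximal such that Hom(S, t_iY[q]) ≠ 0, then p ≤ q ≤ p+1, and q = p+1 if and only if Hom(S_i, Y[p]) ≠ 0. -/
open CategoryTheory CategoryTheory.Limits CategoryTheory.Pretriangulated TensorProduct

variable {k : Type*} [Field k]
variable {C : Type*} [Category C] [Preadditive C] [HasZeroObject C] [Linear k C]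
  [HasShift C ℤ] [∀ n : ℤ, (CategoryTheory.shiftFunctor C n).Additive] [Pretriangulated C]

set_option linter.unusedSectionVars false in
lemma hom_forall_zero_iff {A B : C} : (∀ f : A ⟶ B, f = 0) ↔ Subsingleton (A ⟶ B) :=
  ⟨fun h => ⟨fun a b => (h a).trans (h b).symm⟩, fun h f => h.elim f 0⟩

lemma tensorAux {M N : Type*} [AddCommGroup M] [AddCommGroup N] [Module k M] [Module k N]
    (h : Subsingleton M ∨ Subsingleton N) : Subsingleton (M ⊗[k] N) := by
  constructor
  suffices hz : ∀ z : M ⊗[k] N, z = 0 by intro x y; rw [hz x, hz y]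
  intro z
  induction z using TensorProduct.induction_on with
  | zero => rfl
  | tmul m n =>
      rcases h with h | h
      · rw [h.elim m 0, TensorProduct.zero_tmul]
      · rw [h.elim n 0, TensorProduct.tmul_zero]
  | add a b ha hb => rw [ha, hb, add_zero]

lemma vanish₂Aux (Δ : Triangle C) (hΔ : Δ ∈ distTriang C) (A : C)
    (h1 : ∀ f : A ⟶ Δ.obj₁, f = 0) (h3 : ∀ f : A ⟶ Δ.obj₃, f = 0) :
    ∀ f : A ⟶ Δ.obj₂, f = 0 := by
  intro f
  obtain ⟨g, hg⟩ := Triangle.coyoneda_exact₂ Δ hΔ f (h3 _)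
  rw [hg, h1 g, Limits.zero_comp]

lemma vanish₃Aux (Δ : Triangle C) (hΔ : Δ ∈ distTriang C) (A : C)
    (h2 : ∀ f : A ⟶ Δ.obj₂, f = 0) (h1 : ∀ f : A ⟶ Δ.obj₁⟦(1 : ℤ)⟧, f = 0) :
    ∀ f : A ⟶ Δ.obj₃, f = 0 := by
  intro f
  obtain ⟨g, hg⟩ := Triangle.coyoneda_exact₃ Δ hΔ f (h1 _)
  rw [hg, h2 g, Limits.zero_comp]

set_option linter.unusedSectionVars false in
lemma zero_transport {A B B' : C} (iso : B ≅ B') (h : ∀ f : A ⟶ B, f = 0) :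
    ∀ f : A ⟶ B', f = 0 := by
  intro f
  have hf : f = (f ≫ iso.inv) ≫ iso.hom := by simp
  rw [hf, h (f ≫ iso.inv), Limits.zero_comp]

/-- Let `Sᵢ, i ∈ Γ`, be a `Γ`-configuration of 2-spherical objects,
`S = ⊕ᵢ Sᵢ`, and `Y` an object with `p` maximal such that `Hom(S, Y[p]) ≠ 0`.  If `q` is
maximal such that `Hom(S, tᵢY[q]) ≠ 0`, then `p ≤ q ≤ p + 1`, and `q = p + 1` if and only
if `Hom(Sᵢ, Y[p]) ≠ 0`.  (A map from the direct sum `S` is nonzero in some degree iff some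
component `Sⱼ` admits a nonzero map in that degree.) -/
theorem twist_max_degree_bounds
    {ι : Type*} (S : ι → C) (adj : ι → ι → Prop)
    (hsph : ∀ i, IsTwoSpherical (k := k) (S i))
    (hconf : ∀ i j : ι, i ≠ j →
      (adj i j → Module.finrank k (S i ⟶ (S j)⟦(1 : ℤ)⟧) = 1 ∧
        (∀ d : ℤ, d ≠ 1 → ∀ f : S i ⟶ (S j)⟦d⟧, f = 0)) ∧
      (¬ adj i j → ∀ (d : ℤ) (f : S i ⟶ (S j)⟦d⟧), f = 0))
    (i : ι) (T : TwistDatum k (S i)) (ht : T.t.IsEquivalence) (hts : T.t.CommShift ℤ)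
    (e : T.t.obj (S i) ≅ (S i)⟦(-1 : ℤ)⟧)
    (Y : C) (p q : ℤ)
    (hp1 : ∃ j, ∃ f : S j ⟶ Y⟦p⟧, f ≠ 0)
    (hp2 : ∀ d : ℤ, p < d → ∀ j, ∀ f : S j ⟶ Y⟦d⟧, f = 0)
    (hq1 : ∃ j, ∃ f : S j ⟶ (T.t.obj Y)⟦q⟧, f ≠ 0)
    (hq2 : ∀ d : ℤ, q < d → ∀ j, ∀ f : S j ⟶ (T.t.obj Y)⟦d⟧, f = 0) :
    p ≤ q ∧ q ≤ p + 1 ∧ (q = p + 1 ↔ ∃ f : S i ⟶ Y⟦p⟧, f ≠ 0)  := by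
  letI := ht
  letI := hts
  have hSSi : ∀ m : ℤ, m ≠ 0 → m ≠ 2 → ∀ f : S i ⟶ (S i)⟦m⟧, f = 0 := (hsph i).2.2.1
  have hSSj : ∀ j, j ≠ i → ∀ m : ℤ, m ≠ 1 → ∀ f : S j ⟶ (S i)⟦m⟧, f = 0 := by
    intro j hj m hm f
    by_cases ha : adj j i
    · exact ((hconf j i hj).1 ha).2 m hm f
    · exact (hconf j i hj).2 ha m f
  have hEvan : ∀ (j : ι) (m : ℤ),
      (∀ e : ℤ, (∀ f : S i ⟶ Y⟦e⟧, f = 0) ∨ (∀ g : S j ⟶ (S i)⟦m - e⟧, g = 0)) →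
      ∀ f : S j ⟶ (T.E.obj Y)⟦m⟧, f = 0 := by
    intro j m hcomp
    obtain ⟨φ⟩ := T.hE (S j) Y m
    haveI hc1 : ∀ e : ℤ, Subsingleton ((S i ⟶ Y⟦e⟧) ⊗[k] (S j ⟶ (S i)⟦m - e⟧)) := by
      intro e
      refine tensorAux ?_
      rcases hcomp e with h | h
      · exact Or.inl (hom_forall_zero_iff.1 h)
      · exact Or.inr (hom_forall_zero_iff.1 h)
    haveI : Subsingleton (S j ⟶ (T.E.obj Y)⟦m⟧) :=
      φ.toEquiv.subsingleton_congr.2 inferInstance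
    exact fun f => Subsingleton.elim f 0
  have ffT : T.t.FullyFaithful := Functor.FullyFaithful.ofFullyFaithful T.t
  have ffS : (shiftFunctor C (-1 : ℤ)).FullyFaithful := Functor.FullyFaithful.ofFullyFaithful _
  have hA : ∀ d d' : ℤ, d' = d - 1 →
      ((∀ f : S i ⟶ (T.t.obj Y)⟦d⟧, f = 0) ↔ (∀ f : S i ⟶ Y⟦d'⟧, f = 0)) := by
    intro d d' hd
    rw [hom_forall_zero_iff, hom_forall_zero_iff]
    refine Equiv.subsingleton_congr ?_
    exact (ffS.homEquiv).trans <|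
      (Iso.homCongr e.symm
        (((shiftFunctorAdd' C d (-1) d' (by omega)).app (T.t.obj Y)).symm ≪≫
          ((T.t.commShiftIso d').app Y).symm)).trans
      ffT.homEquiv.symm
  have hΔ : ∀ m : ℤ, ((CategoryTheory.shiftFunctor (Triangle C) m).obj
      (Triangle.mk (T.f.app Y) (T.g.app Y) (T.h Y))) ∈ distTriang C :=
    fun m => Triangle.shift_distinguished _ (T.tri Y) m
  have claim1 : ∀ d : ℤ, p + 1 ≤ d → (p + 2 ≤ d ∨ ∀ f : S i ⟶ Y⟦p⟧, f = 0) →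
      ∀ j, ∀ f : S j ⟶ (T.t.obj Y)⟦d⟧, f = 0 := by
    intro d hd hcase j
    have hE1 : ∀ f : S j ⟶ (T.E.obj Y)⟦d + 1⟧, f = 0 := by
      apply hEvan
      intro e'
      rcases le_or_gt e' p with he | he
      swap
      · exact Or.inl (hp2 e' he i)
      by_cases hji : j = i
      · subst hji
        by_cases h2 : d + 1 - e' = 2
        · have hep : e' = p := by omega
          rcases hcase with hc | hc
          · omega
          · subst hep; exact Or.inl hc
        · exact Or.inr (hSSi _ (by omega) h2)
      · exact Or.inr (hSSj j hji _ (by omega))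
    intro f
    refine vanish₃Aux _ (hΔ d) (S j) ?_ ?_ f
    · exact fun g => hp2 d (by omega) j g
    · exact zero_transport ((shiftFunctorAdd' C d 1 (d + 1) rfl).app (T.E.obj Y)) hE1
  have claim2 : q ≤ p + 1 := by
    by_contra hcq
    push_neg at hcq
    obtain ⟨j, f, hf⟩ := hq1
    exact hf (claim1 q (by omega) (Or.inl (by omega)) j f)
  have claim3 : (∀ f : S i ⟶ Y⟦p⟧, f = 0) → q ≤ p := by
    intro h0
    by_contra hcq
    push_neg at hcq
    obtain ⟨j, f, hf⟩ := hq1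
    exact hf (claim1 q (by omega) (Or.inr h0) j f)
  have claim4 : (∃ f : S i ⟶ Y⟦p⟧, f ≠ 0) → q = p + 1 := by
    rintro ⟨f, hf⟩
    refine le_antisymm claim2 ?_
    by_contra hcq
    push_neg at hcq
    have hz := (hA (p + 1) p (by omega)).1 (fun g => hq2 (p + 1) (by omega) i g)
    exact hf (hz f)
  have claim5 : p ≤ q := by
    by_contra hcq
    push_neg at hcq
    have bi : ∀ d : ℤ, p - 1 ≤ d → ∀ f : S i ⟶ Y⟦d⟧, f = 0 := by
      intro d hd
      exact (hA (d + 1) d (by omega)).1 (fun g => hq2 (d + 1) (by omega) i g)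
    have hall : ∀ j, ∀ f : S j ⟶ Y⟦p⟧, f = 0 := by
      intro j
      by_cases hji : j = i
      · subst hji; exact bi p (by omega)
      · intro f
        have hE0 : ∀ f : S j ⟶ (T.E.obj Y)⟦p⟧, f = 0 := by
          apply hEvan
          intro e'
          rcases le_or_gt (p - 1) e' with he | he
          · exact Or.inl (bi e' he)
          · exact Or.inr (hSSj j hji _ (by omega))
        refine vanish₂Aux _ (hΔ p) (S j) ?_ ?_ f
        · exact hE0
        · exact fun g => hq2 p (by exact hcq) j g
    obtain ⟨j, f, hf⟩ := hp1
    exact hf (hall j f)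
  refine ⟨claim5, claim2, ⟨?_, claim4⟩⟩
  intro hq'
  by_contra hne
  push_neg at hne
  have := claim3 hne
  omega
end
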